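/- arXiv:2206.01295 — 2 statements merged into one kernel-verified Lean document; each statement's English description precedes it below -/
import Mathlib

section
/- If a finite multiplicity set {P_1,...,P_m} ⊆ Δ_c contains all c standard basis vectors e_1,...,e_c (the vertices of the simplex), then its Rashomon Capacity equals log c, i.e., m_C = 2^C = c. -/
open BigOperators

/-- probability simplex on `Fin c` -/
def simplex (c : ℕ) : Set (Fin c → ℝ) :=
  {p | (∀ k, 0 ≤ p k) ∧ ∑ k, p k = 1}

/-- KL divergence (base-2), extended-real valued with the usual conventions. -/
noncomputable def klDiv {c : ℕ} (p q : Fin c → ℝ) : EReal :=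
  ∑ k, if p k = 0 then (0 : EReal)
       else if q k = 0 then ⊤
       else ((p k * Real.logb 2 (p k / q k) : ℝ) : EReal)

/-- Rashomon Capacity of the scores `P 1, …, P m`. -/
noncomputable def capacity {m c : ℕ} (P : Fin m → Fin c → ℝ) : EReal :=
  ⨆ α : simplex m, ⨅ q : simplex c, ∑ j, ((α.1 j : ℝ) : EReal) * klDiv (P j) q.1

/-!
Upper bound: whatever the weights α, the uniform q is admissible, and
`D(p ‖ uniform) = log c - H(p) ≤ log c` for every `p` in the simplex.
Lower bound: put weight `1/c` on each vertex. For any `q`, the objective is then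
`(1/c) ∑ₖ -log qₖ`, which is `⊤` if some `qₖ = 0` and otherwise at least `log c`
by `log x ≤ x - 1` applied at `x = c qₖ`.
-/

open Real Finset

theorem EReal.coe_finset_sum {ι : Type*} (s : Finset ι) (f : ι → ℝ) :
    ((∑ i ∈ s, f i : ℝ) : EReal) = ∑ i ∈ s, (f i : EReal) :=
  map_sum (⟨⟨Real.toEReal, EReal.coe_zero⟩, EReal.coe_add⟩ : ℝ →+ EReal) f s

section

variable {c m : ℕ}

def vertex (k : Fin c) : Fin c → ℝ := fun i => if i = k then 1 else 0

noncomputable def entropy (p : Fin c → ℝ) : ℝ := ∑ k, -(p k * logb 2 (p k))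

lemma le_one_of_mem_simplex {p : Fin c → ℝ} (hp : p ∈ simplex c) (k : Fin c) : p k ≤ 1 :=
  hp.2 ▸ single_le_sum (fun i _ => hp.1 i) (mem_univ k)

lemma uniform_mem_simplex (hc : 0 < c) : (fun _ : Fin c => (c : ℝ)⁻¹) ∈ simplex c :=
  ⟨fun _ => by positivity, by simp [hc.ne']⟩

lemma sum_mul_le_of_mem_simplex {α f : Fin c → ℝ} {b : ℝ} (hα : α ∈ simplex c)
    (hf : ∀ k, f k ≤ b) : ∑ k, α k * f k ≤ b :=
  calc ∑ k, α k * f k ≤ ∑ k, α k * b :=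
        sum_le_sum fun k _ => mul_le_mul_of_nonneg_left (hf k) (hα.1 k)
    _ = b := by rw [← sum_mul, hα.2, one_mul]

lemma exists_mem_simplex_sum_mul_eq_uniform (hc : 0 < c) {σ : Fin c → Fin m}
    (hσ : σ.Injective) : ∃ α ∈ simplex m, ∀ g : Fin m → EReal,
      ∑ j, (α j : EReal) * g j = ∑ k, (((c : ℝ)⁻¹ : ℝ) : EReal) * g (σ k) := by
  classical
  refine ⟨fun j => if j ∈ Set.range σ then (c : ℝ)⁻¹ else 0, ⟨fun j => by positivity, ?_⟩,
    fun g => ?_⟩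
  · rw [← Fintype.sum_of_injective σ hσ (fun _ => (c : ℝ)⁻¹) _ (fun j hj => if_neg hj)
      (fun k => (if_pos (Set.mem_range_self k)).symm)]
    simp [hc.ne']
  · refine (Fintype.sum_of_injective σ hσ _ _ (fun j hj => ?_) (fun k => ?_)).symm
    · simp [hj]
    · simp

lemma entropy_nonneg {p : Fin c → ℝ} (hp : p ∈ simplex c) : 0 ≤ entropy p :=
  sum_nonneg fun k _ => neg_nonneg.2 <|
    mul_nonpos_of_nonneg_of_nonpos (hp.1 k)
      (logb_nonpos one_lt_two (hp.1 k) (le_one_of_mem_simplex hp k))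

lemma klDiv_uniform {p : Fin c → ℝ} (hp : ∑ k, p k = 1) :
    klDiv p (fun _ => (c : ℝ)⁻¹) = ((logb 2 c - entropy p : ℝ) : EReal) := by
  have hterm : ∀ k : Fin c,
      p k * logb 2 (p k / (c : ℝ)⁻¹) = p k * logb 2 c + p k * logb 2 (p k) := by
    intro k
    rcases eq_or_ne (p k) 0 with hk | hk
    · simp [hk]
    · rw [div_inv_eq_mul, logb_mul hk (by exact_mod_cast k.pos.ne'), mul_add, add_comm]
  have hsum : logb 2 c - entropy p = ∑ k, p k * logb 2 (p k / (c : ℝ)⁻¹) := by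
    simp only [hterm, sum_add_distrib, ← sum_mul, hp, entropy, sum_neg_distrib]
    ring
  rw [hsum, EReal.coe_finset_sum, klDiv]
  refine sum_congr rfl fun k _ => ?_
  by_cases hk : p k = 0 <;> simp [hk, k.pos.ne']

lemma klDiv_vertex (k : Fin c) (q : Fin c → ℝ) :
    klDiv (vertex k) q = if q k = 0 then ⊤ else ((-logb 2 (q k) : ℝ) : EReal) := by
  rw [klDiv, sum_eq_single k (fun i _ hik => by simp [vertex, hik]) (by simp)]
  simp [vertex]

lemma vertex_injective : (vertex : Fin c → Fin c → ℝ).Injective := by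
  intro k l h
  by_contra hkl
  simpa [vertex, hkl] using congrFun h k

lemma klDiv_vertex_nonneg {q : Fin c → ℝ} (hq : q ∈ simplex c) (k : Fin c) :
    0 ≤ klDiv (vertex k) q := by
  rw [klDiv_vertex]
  split_ifs
  · exact le_top
  · exact EReal.coe_nonneg.2 <| neg_nonneg.2 <|
      logb_nonpos one_lt_two (hq.1 k) (le_one_of_mem_simplex hq k)

lemma logb_card_le_sum_neg_logb {q : Fin c → ℝ} (hq : ∑ k, q k = 1)
    (hpos : ∀ k, 0 < q k) : logb 2 c ≤ ∑ k, (c : ℝ)⁻¹ * -logb 2 (q k) := by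
  have hc : (0 : ℝ) < c := by
    rcases Nat.eq_zero_or_pos c with rfl | hc
    · simp at hq
    · exact_mod_cast hc
  have hlog : log c ≤ ∑ k, (c : ℝ)⁻¹ * -log (q k) :=
    calc log c = ∑ k, (c : ℝ)⁻¹ * (log c + 1 - c * q k) := by
          simp only [mul_sub, sum_sub_distrib, ← mul_assoc, inv_mul_cancel₀ hc.ne', one_mul, hq,
            sum_const, card_univ, Fintype.card_fin, nsmul_eq_mul]
          field_simp
          ring
      _ ≤ ∑ k, (c : ℝ)⁻¹ * -log (q k) := by
          refine sum_le_sum fun k _ => mul_le_mul_of_nonneg_left ?_ (by positivity)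
          have := log_le_sub_one_of_pos (mul_pos hc (hpos k))
          rw [log_mul hc.ne' (hpos k).ne'] at this
          linarith
  calc logb 2 c = log c / log 2 := rfl
    _ ≤ (∑ k, (c : ℝ)⁻¹ * -log (q k)) / log 2 :=
        div_le_div_of_nonneg_right hlog (log_nonneg one_le_two)
    _ = ∑ k, (c : ℝ)⁻¹ * -logb 2 (q k) := by
        rw [sum_div]
        exact sum_congr rfl fun k _ => by rw [logb]; ring

lemma logb_card_le_sum_klDiv_vertex {q : Fin c → ℝ} (hq : q ∈ simplex c) :
    ((logb 2 c : ℝ) : EReal) ≤ ∑ k, (((c : ℝ)⁻¹ : ℝ) : EReal) * klDiv (vertex k) q := by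
  by_cases hzero : ∃ k, q k = 0
  · obtain ⟨k, hk⟩ := hzero
    have hc : (0 : ℝ) < (c : ℝ)⁻¹ := inv_pos.2 (by exact_mod_cast k.pos)
    calc _ ≤ ⊤ := le_top
      _ = (((c : ℝ)⁻¹ : ℝ) : EReal) * klDiv (vertex k) q := by
          rw [klDiv_vertex, if_pos hk, EReal.coe_mul_top_of_pos hc]
      _ ≤ _ := single_le_sum (fun i _ => EReal.mul_nonneg (EReal.coe_nonneg.2 hc.le)
          (klDiv_vertex_nonneg hq i)) (mem_univ k)
  · push Not at hzero
    have hsum : ∑ k, (((c : ℝ)⁻¹ : ℝ) : EReal) * klDiv (vertex k) q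
        = ((∑ k, (c : ℝ)⁻¹ * -logb 2 (q k) : ℝ) : EReal) := by
      rw [EReal.coe_finset_sum]
      exact sum_congr rfl fun k _ => by rw [klDiv_vertex, if_neg (hzero k), EReal.coe_mul]
    rw [hsum, EReal.coe_le_coe_iff]
    exact logb_card_le_sum_neg_logb hq.2 fun k => (hq.1 k).lt_of_ne' (hzero k)

lemma capacity_le_logb_card (hc : 0 < c) {P : Fin m → Fin c → ℝ}
    (hP : ∀ j, P j ∈ simplex c) : capacity P ≤ ((logb 2 c : ℝ) : EReal) := by
  refine iSup_le fun α => iInf_le_of_le ⟨_, uniform_mem_simplex hc⟩ ?_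
  simp only [klDiv_uniform (hP _).2, ← EReal.coe_mul, ← EReal.coe_finset_sum,
    EReal.coe_le_coe_iff]
  exact sum_mul_le_of_mem_simplex α.2 fun j => sub_le_self _ (entropy_nonneg (hP j))

lemma logb_card_le_capacity (hc : 0 < c) {P : Fin m → Fin c → ℝ}
    (hvert : ∀ k, ∃ j, P j = vertex k) : ((logb 2 c : ℝ) : EReal) ≤ capacity P := by
  choose σ hσ using hvert
  obtain ⟨α, hα, hsum⟩ := exists_mem_simplex_sum_mul_eq_uniform hc (σ := σ)
    fun k l h => vertex_injective (by rw [← hσ k, ← hσ l, h])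
  refine le_iSup_of_le ⟨α, hα⟩ (le_iInf fun q => ?_)
  rw [hsum]
  simp only [hσ]
  exact logb_card_le_sum_klDiv_vertex q.2

end

/-- if the multiplicity set contains all `c` vertices
`e_1, …, e_c` of the simplex, its Rashomon Capacity equals `log₂ c`,
i.e. `m_C = 2^C = c`. -/
theorem rashomon_capacity_eq_log_of_vertices (m c : ℕ) (hc : 0 < c)
    (P : Fin m → Fin c → ℝ) (hP : ∀ j, P j ∈ simplex c)
    (hvert : ∀ k : Fin c, ∃ j : Fin m, P j = fun i => if i = k then (1 : ℝ) else 0) :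
    capacity P = ((Real.logb 2 c : ℝ) : EReal) ∧
      (2 : ℝ) ^ (Real.logb 2 c) = (c : ℝ) :=
  ⟨le_antisymm (capacity_le_logb_card hc hP) (logb_card_le_capacity hc hvert),
    rpow_logb two_pos (by norm_num) (by exact_mod_cast hc)⟩
end

section
/- For any finite multiplicity set M_ε(x) ⊆ Δ_c of arbitrary cardinality m, there exists a subset A ⊆ M_ε(x) with |A| ≤ c such that the Rashomon Capacity of A equals the Rashomon Capacity of M_ε(x), i.e., at most c scores suffice to achieve the capacity of the whole set. -/
open BigOperators

/-- Rashomon Capacity of a finite set `S` of score distributions. -/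
noncomputable def capacityF {c : ℕ} (S : Finset (Fin c → ℝ)) : EReal :=
  ⨆ α : {α : (Fin c → ℝ) → ℝ // (∀ p, 0 ≤ α p) ∧ ∑ p ∈ S, α p = 1},
    ⨅ q : simplex c, ∑ p ∈ S, ((α.1 p : ℝ) : EReal) * klDiv p q.1

/-!
Write `H p = ∑ₖ pₖ log pₖ` and `m = ∑ₚ wₚ • p` for the mixture of a weighting `w` of `S`. The
weighted divergence `∑ₚ wₚ D(p‖q)` is `⊤` if `q` vanishes somewhere `m` does not, and otherwise
equals `∑ₚ wₚ H p − ∑ₖ mₖ log qₖ`. So, simultaneously for every `q`, it does not decrease when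
`w` is replaced by a weighting with the same mixture and no smaller `∑ₚ wₚ H p`.

If more than `c` points carry weight, they satisfy a nontrivial linear relation in `ℝᶜ`, whose
coefficients sum to zero because the points lie on the hyperplane `∑ₖ pₖ = 1`. Moving the weights
along the relation, in the direction that does not decrease `∑ₚ wₚ H p`, until one of them
vanishes keeps the mixture and frees a point. Hence every weighting of `S` is dominated by one
supported on at most `c` points, and a subset of `S` of size at most `c` with maximal capacity
attains the capacity of `S`.
-/

open Finset

lemma exists_nonneg_sub_mul_eq_zero {ι : Type*} {T : Finset ι} {w γ : ι → ℝ}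
    (hw : ∀ p ∈ T, 0 ≤ w p) (hγ : ∃ p ∈ T, 0 < γ p) :
    ∃ t : ℝ, 0 ≤ t ∧ (∀ p ∈ T, 0 ≤ w p - t * γ p) ∧ ∃ p₀ ∈ T, w p₀ - t * γ p₀ = 0 := by
  obtain ⟨p₀, hp₀, hmin⟩ := (T.filter (0 < γ ·)).exists_min_image (fun p => w p / γ p)
    (by simpa [Finset.Nonempty] using hγ)
  rw [mem_filter] at hp₀
  refine ⟨w p₀ / γ p₀, div_nonneg (hw p₀ hp₀.1) hp₀.2.le, fun p hp => ?_, p₀, hp₀.1, ?_⟩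
  · rcases lt_or_ge 0 (γ p) with hγp | hγp
    · have := hmin p (mem_filter.2 ⟨hp, hγp⟩)
      rw [le_div_iff₀ hγp] at this
      linarith
    · nlinarith [hw p hp, div_nonneg (hw p₀ hp₀.1) hp₀.2.le]
  · rw [div_mul_cancel₀ _ hp₀.2.ne']
    ring

section Reweighting

variable {V : Type*} [AddCommGroup V] [Module ℝ V]

lemma map_sum_smul_of_forall_eq_one (ℓ : V →ₗ[ℝ] ℝ) {T : Finset V} (hℓ : ∀ p ∈ T, ℓ p = 1)
    (γ : V → ℝ) : ℓ (∑ p ∈ T, γ p • p) = ∑ p ∈ T, γ p := by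
  simp only [map_sum, map_smul, smul_eq_mul]
  exact sum_congr rfl fun p hp => by rw [hℓ p hp, mul_one]

lemma exists_relation_pos_and_sum_mul_nonpos [FiniteDimensional ℝ V] (ℓ : V →ₗ[ℝ] ℝ)
    {T : Finset V} (hℓ : ∀ p ∈ T, ℓ p = 1) (hT : Module.finrank ℝ V < #T) (f : V → ℝ) :
    ∃ γ : V → ℝ, ∑ p ∈ T, γ p • p = 0 ∧ ∑ p ∈ T, γ p * f p ≤ 0 ∧ ∃ p ∈ T, 0 < γ p := by
  obtain ⟨g, hg, hg_ne⟩ := Module.exists_nontrivial_relation_of_finrank_lt_card hT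
  -- On the hyperplane `ℓ = 1` the coefficients of a relation sum to zero, so they change sign.
  have exists_pos : ∀ γ : V → ℝ, ∑ p ∈ T, γ p • p = 0 → (∃ p ∈ T, γ p ≠ 0) →
      ∃ p ∈ T, 0 < γ p := fun γ hγ hγ_ne =>
    exists_pos_of_sum_zero_of_exists_nonzero γ
      (by rw [← map_sum_smul_of_forall_eq_one ℓ hℓ, hγ, map_zero]) hγ_ne
  rcases le_total (∑ p ∈ T, g p * f p) 0 with hgf | hgf
  · exact ⟨g, hg, hgf, exists_pos g hg hg_ne⟩
  · have hg' : ∑ p ∈ T, (-g) p • p = 0 := by simp [neg_smul, hg]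
    refine ⟨-g, hg', by simpa using hgf, exists_pos (-g) hg' ?_⟩
    simpa using hg_ne

theorem exists_subset_card_le_finrank_sum_smul_eq [FiniteDimensional ℝ V] (ℓ : V →ₗ[ℝ] ℝ)
    (f : V → ℝ) (T : Finset V) (hℓ : ∀ p ∈ T, ℓ p = 1) (w : V → ℝ) (hw : ∀ p ∈ T, 0 ≤ w p) :
    ∃ A ⊆ T, #A ≤ Module.finrank ℝ V ∧ ∃ β : V → ℝ, (∀ p ∈ A, 0 ≤ β p) ∧
      ∑ p ∈ A, β p • p = ∑ p ∈ T, w p • p ∧ ∑ p ∈ T, w p * f p ≤ ∑ p ∈ A, β p * f p := by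
  classical
  induction T using Finset.strongInduction generalizing w with
  | H T ih =>
  by_cases hT : #T ≤ Module.finrank ℝ V
  · exact ⟨T, subset_rfl, hT, w, hw, rfl, le_rfl⟩
  obtain ⟨γ, hγ, hγf, hγ_pos⟩ := exists_relation_pos_and_sum_mul_nonpos ℓ hℓ (not_le.1 hT) f
  obtain ⟨t, ht, hw', p₀, hp₀, hw'p₀⟩ := exists_nonneg_sub_mul_eq_zero hw hγ_pos
  set w' := fun p => w p - t * γ p
  obtain ⟨A, hA, hAcard, β, hβ, hβmix, hβf⟩ := ih (T.erase p₀) (erase_ssubset hp₀)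
    (fun p hp => hℓ p (mem_of_mem_erase hp)) w' (fun p hp => hw' p (mem_of_mem_erase hp))
  refine ⟨A, hA.trans (erase_subset p₀ T), hAcard, β, hβ, ?_, ?_⟩
  · calc ∑ p ∈ A, β p • p = ∑ p ∈ T.erase p₀, w' p • p := hβmix
      _ = ∑ p ∈ T, w' p • p := sum_erase T (by simp [w', hw'p₀])
      _ = ∑ p ∈ T, w p • p := by simp [w', sub_smul, mul_smul, sum_sub_distrib, ← smul_sum, hγ]
  · calc ∑ p ∈ T, w p * f p ≤ ∑ p ∈ T, w p * f p - t * ∑ p ∈ T, γ p * f p :=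
          le_sub_self_iff _ |>.2 (mul_nonpos_of_nonneg_of_nonpos ht hγf)
      _ = ∑ p ∈ T, w' p * f p := by simp [w', sub_mul, sum_sub_distrib, mul_sum, mul_assoc]
      _ = ∑ p ∈ T.erase p₀, w' p * f p := (sum_erase T (by simp [w', hw'p₀])).symm
      _ ≤ ∑ p ∈ A, β p * f p := hβf

end Reweighting

namespace EReal

lemma coe_finset_sum_s14 {ι : Type*} (s : Finset ι) (f : ι → ℝ) :
    ((∑ i ∈ s, f i : ℝ) : EReal) = ∑ i ∈ s, (f i : EReal) :=
  map_sum (⟨⟨Real.toEReal, coe_zero⟩, coe_add⟩ : ℝ →+ EReal) f s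

lemma finset_sum_ne_bot {ι : Type*} {s : Finset ι} {f : ι → EReal} (h : ∀ i ∈ s, f i ≠ ⊥) :
    ∑ i ∈ s, f i ≠ ⊥ :=
  Finset.sum_induction f (· ≠ ⊥) (fun _ _ ha hb => add_ne_bot_iff.2 ⟨ha, hb⟩) zero_ne_bot h

lemma finset_sum_eq_top {ι : Type*} [DecidableEq ι] {s : Finset ι} {f : ι → EReal}
    (h : ∀ i ∈ s, f i ≠ ⊥) {i₀ : ι} (hi₀ : i₀ ∈ s) (htop : f i₀ = ⊤) : ∑ i ∈ s, f i = ⊤ := by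
  rw [← add_sum_erase s f hi₀, htop]
  exact top_add_of_ne_bot (finset_sum_ne_bot fun i hi => h i (mem_of_mem_erase hi))

lemma coe_mul_ne_bot {a : ℝ} (ha : 0 ≤ a) {x : EReal} (hx : x ≠ ⊥) : (a : EReal) * x ≠ ⊥ :=
  (mul_ne_bot _ _).2
    ⟨.inl (coe_ne_bot a), .inr hx, .inl (coe_ne_top a), .inl (EReal.coe_nonneg.2 ha)⟩

end EReal

section KullbackLeibler

variable {c : ℕ}

noncomputable def negEntropy (p : Fin c → ℝ) : ℝ := ∑ k, p k * Real.logb 2 (p k)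

lemma klDiv_ne_bot (p q : Fin c → ℝ) : klDiv p q ≠ ⊥ :=
  EReal.finset_sum_ne_bot fun k _ => by split_ifs <;> simp [-EReal.coe_mul]

lemma klDiv_eq_top {p q : Fin c → ℝ} {k : Fin c} (hq : q k = 0) (hp : p k ≠ 0) :
    klDiv p q = ⊤ :=
  EReal.finset_sum_eq_top (fun i _ => by split_ifs <;> simp [-EReal.coe_mul]) (mem_univ k)
    (by simp [hp, hq])

lemma klDiv_eq_coe {p q : Fin c → ℝ} (h : ∀ k, q k = 0 → p k = 0) :
    klDiv p q = ((negEntropy p - ∑ k, p k * Real.logb 2 (q k) : ℝ) : EReal) := by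
  rw [negEntropy, ← sum_sub_distrib, EReal.coe_finset_sum_s14, klDiv]
  refine sum_congr rfl fun k _ => ?_
  by_cases hp : p k = 0
  · simp [hp]
  · have hq : q k ≠ 0 := fun hq => hp (h k hq)
    rw [if_neg hp, if_neg hq, Real.logb_div hp hq, mul_sub]

end KullbackLeibler

section WeightedDivergence

variable {c : ℕ} {S : Finset (Fin c → ℝ)} {w : (Fin c → ℝ) → ℝ} {q : Fin c → ℝ}

lemma sum_mul_klDiv_eq_top (hw : ∀ p ∈ S, 0 ≤ w p) {k : Fin c} (hq : q k = 0)
    (hm : (∑ p ∈ S, w p • p) k ≠ 0) : ∑ p ∈ S, (w p : EReal) * klDiv p q = ⊤ := by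
  classical
  rw [Finset.sum_apply _ S] at hm
  obtain ⟨p, hp, hwp⟩ := exists_ne_zero_of_sum_ne_zero hm
  rw [Pi.smul_apply, smul_eq_mul, mul_ne_zero_iff] at hwp
  refine EReal.finset_sum_eq_top (fun p hp => EReal.coe_mul_ne_bot (hw p hp) (klDiv_ne_bot p q))
    hp ?_
  rw [klDiv_eq_top hq hwp.2, EReal.coe_mul_top_of_pos ((hw p hp).lt_of_ne' hwp.1)]

lemma sum_mul_klDiv_eq_coe (hS : ∀ p ∈ S, 0 ≤ p) (hw : ∀ p ∈ S, 0 ≤ w p)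
    (hq : ∀ k, q k = 0 → (∑ p ∈ S, w p • p) k = 0) :
    ∑ p ∈ S, (w p : EReal) * klDiv p q = ((∑ p ∈ S, w p * negEntropy p -
      ∑ k, (∑ p ∈ S, w p • p) k * Real.logb 2 (q k) : ℝ) : EReal) := by
  have hterm : ∀ p ∈ S, (w p : EReal) * klDiv p q =
      ((w p * negEntropy p - ∑ k, w p * p k * Real.logb 2 (q k) : ℝ) : EReal) := by
    intro p hp
    rcases (hw p hp).eq_or_lt' with hwp | hwp
    · simp [hwp]
    -- `p` carries positive weight in the mixture, which vanishes wherever `q` does.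
    have hpq : ∀ k, q k = 0 → p k = 0 := fun k hk => by
      have hsum := hq k hk
      simp only [Finset.sum_apply, Pi.smul_apply, smul_eq_mul] at hsum
      have := (sum_eq_zero_iff_of_nonneg fun x hx => mul_nonneg (hw x hx) (hS x hx k)).1 hsum p hp
      exact (mul_eq_zero.1 this).resolve_left hwp.ne'
    rw [klDiv_eq_coe hpq, ← EReal.coe_mul, mul_sub, mul_sum]
    simp only [mul_assoc]
  rw [sum_congr rfl hterm, ← EReal.coe_finset_sum_s14, sum_sub_distrib, sum_comm]
  simp only [Finset.sum_apply, Pi.smul_apply, smul_eq_mul, sum_mul]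

theorem sum_mul_klDiv_le_of_sum_smul_eq {A : Finset (Fin c → ℝ)} {β : (Fin c → ℝ) → ℝ}
    (hS : ∀ p ∈ S, 0 ≤ p) (hA : ∀ p ∈ A, 0 ≤ p) (hw : ∀ p ∈ S, 0 ≤ w p)
    (hβ : ∀ p ∈ A, 0 ≤ β p) (hmix : ∑ p ∈ A, β p • p = ∑ p ∈ S, w p • p)
    (hent : ∑ p ∈ S, w p * negEntropy p ≤ ∑ p ∈ A, β p * negEntropy p) (q : Fin c → ℝ) :
    ∑ p ∈ S, (w p : EReal) * klDiv p q ≤ ∑ p ∈ A, (β p : EReal) * klDiv p q := by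
  by_cases hq : ∀ k, q k = 0 → (∑ p ∈ S, w p • p) k = 0
  · rw [sum_mul_klDiv_eq_coe hS hw hq, sum_mul_klDiv_eq_coe hA hβ (hmix ▸ hq), hmix,
      EReal.coe_le_coe_iff]
    linarith
  · obtain ⟨k, hqk, hm⟩ := not_forall₂.1 hq
    rw [sum_mul_klDiv_eq_top hβ hqk (hmix ▸ hm)]
    exact le_top

end WeightedDivergence

section Capacity

variable {c : ℕ}

lemma iInf_le_capacityF {A : Finset (Fin c → ℝ)} {β : (Fin c → ℝ) → ℝ}
    (hβ : ∀ p ∈ A, 0 ≤ β p) (hβ_one : ∑ p ∈ A, β p = 1) :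
    ⨅ q : simplex c, ∑ p ∈ A, (β p : EReal) * klDiv p q.1 ≤ capacityF A := by
  have hmax : ∀ p ∈ A, max (β p) 0 = β p := fun p hp => max_eq_left (hβ p hp)
  refine le_iSup_of_le ⟨fun p => max (β p) 0, fun p => le_max_right _ _,
    (sum_congr rfl hmax).trans hβ_one⟩ (iInf_mono fun q => le_of_eq ?_)
  exact sum_congr rfl fun p hp => by simp only [hmax p hp]

lemma capacityF_mono {A S : Finset (Fin c → ℝ)} (hAS : A ⊆ S) : capacityF A ≤ capacityF S := by
  classical
  refine iSup_le fun ⟨α, hα, hα_one⟩ => ?_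
  have hsum : ∀ g : (Fin c → ℝ) → EReal,
      ∑ p ∈ S, ((if p ∈ A then α p else 0 : ℝ) : EReal) * g p = ∑ p ∈ A, (α p : EReal) * g p :=
    fun g => by simp only [apply_ite, ite_mul, EReal.coe_zero, zero_mul, sum_ite_mem,
      inter_eq_right.2 hAS]
  calc ⨅ q : simplex c, ∑ p ∈ A, (α p : EReal) * klDiv p q.1
      = ⨅ q : simplex c, ∑ p ∈ S, ((if p ∈ A then α p else 0 : ℝ) : EReal) * klDiv p q.1 := by
        simp only [hsum]
    _ ≤ capacityF S := iInf_le_capacityF (fun p _ => by split_ifs <;> simp [hα]) <| by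
        rw [sum_ite_mem, inter_eq_right.2 hAS, hα_one]

end Capacity

theorem capacity_achieved_by_c_scores_general (c : ℕ) (S : Finset (Fin c → ℝ))
    (hSsub : ↑S ⊆ simplex c) :
    ∃ A : Finset (Fin c → ℝ), A ⊆ S ∧ A.card ≤ c ∧ capacityF A = capacityF S := by
  classical
  obtain ⟨A₀, hA₀, hA₀_max⟩ :=
    (S.powerset.filter (#· ≤ c)).exists_max_image capacityF ⟨∅, by simp⟩
  rw [mem_filter, mem_powerset] at hA₀
  refine ⟨A₀, hA₀.1, hA₀.2, le_antisymm (capacityF_mono hA₀.1) ?_⟩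
  refine iSup_le fun ⟨w, hw, hw_one⟩ => ?_
  let coordSum : (Fin c → ℝ) →ₗ[ℝ] ℝ := ∑ k, LinearMap.proj k
  have hcoordSum : ∀ p ∈ S, coordSum p = 1 := fun p hp => by simpa [coordSum] using (hSsub hp).2
  obtain ⟨A, hAS, hA_card, β, hβ, hmix, hent⟩ := exists_subset_card_le_finrank_sum_smul_eq
    coordSum negEntropy S hcoordSum w fun p _ => hw p
  have hβ_one : ∑ p ∈ A, β p = 1 := by
    rw [← map_sum_smul_of_forall_eq_one coordSum (fun p hp => hcoordSum p (hAS hp)), hmix,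
      map_sum_smul_of_forall_eq_one coordSum hcoordSum, hw_one]
  have hnonneg : ∀ p ∈ S, 0 ≤ p := fun p hp => (hSsub hp).1
  calc ⨅ q : simplex c, ∑ p ∈ S, (w p : EReal) * klDiv p q.1
      ≤ ⨅ q : simplex c, ∑ p ∈ A, (β p : EReal) * klDiv p q.1 := iInf_mono fun q =>
        sum_mul_klDiv_le_of_sum_smul_eq hnonneg (fun p hp => hnonneg p (hAS hp))
          (fun p _ => hw p) hβ hmix hent q
    _ ≤ capacityF A := iInf_le_capacityF hβ hβ_one
    _ ≤ capacityF A₀ := hA₀_max A (by simpa [hAS] using hA_card)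

/-- for any finite multiplicity set `S ⊆ Δ_c`, at most `c` of its
scores suffice to achieve the Rashomon Capacity of the whole set. -/
theorem capacity_achieved_by_c_scores (c : ℕ) (S : Finset (Fin c → ℝ))
    (hS : S.Nonempty) (hSsub : ↑S ⊆ simplex c) :
    ∃ A : Finset (Fin c → ℝ), A ⊆ S ∧ A.card ≤ c ∧ capacityF A = capacityF S :=
  capacity_achieved_by_c_scores_general c S hSsub
end
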